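/- arXiv:2310.13174 — 4 statements merged into one kernel-verified Lean document; each statement's English description precedes it below -/
import Mathlib

section
/- Let U = 2^w, V = 2^ℓ, and let r be a uniformly random odd element of [2^{w+ℓ}]. Define h(x) = ⌊(r·x mod 2^{w+ℓ}) / 2^w⌋. Then for any fixed distinct z, z' ∈ [2^w], the probability over r that h(z) = h(z') is at most 2/2^ℓ. -/
/-!
Write `z - z' = 2 ^ j * o` with `o` odd, so `j < w`. A collision `h z = h z'` forces `r (z - z')`
to lie within `2 ^ w` of `0` modulo `2 ^ (w + ℓ)`, i.e.
`(r (z - z') + 2 ^ w) % 2 ^ (w + ℓ) < 2 ^ (w + 1)`. Cancelling `2 ^ j`, this says that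
`t = (r o + 2 ^ (w - j)) % 2 ^ (w + ℓ)` has `t % 2 ^ (w + ℓ - j) < 2 ^ (w - j + 1)`. As `o` is odd,
`r ↦ t` is injective and `t` is odd, and there are only `2 ^ j * 2 ^ (w - j) = 2 ^ w` odd `t` of
this kind, against `2 ^ (w + ℓ - 1)` odd `r`.
-/

open Finset

lemma card_filter_odd_range_two_mul (n : ℕ) : #{r ∈ range (2 * n) | Odd r} = n := by
  induction n with
  | zero => rfl
  | succ n ih =>
    rw [mul_add_one, range_add_one, filter_insert, range_add_one, filter_insert,
      if_pos (odd_two_mul_add_one n), if_neg (by simp), card_insert_of_notMem (by simp), ih]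

lemma lt_add_of_div_eq_div {a b n : ℕ} (hn : 0 < n) (h : a / n = b / n) : a < b + n :=
  calc a < a / n * n + n := Nat.lt_div_mul_add hn
    _ = b / n * n + n := by rw [h]
    _ ≤ b + n := Nat.add_le_add_right (Nat.div_mul_le_self b n) n

lemma sub_add_mod_lt_of_mod_div_eq {a b m n : ℕ} (hn : 0 < n) (hba : b ≤ a)
    (h : a % m / n = b % m / n) : (a - b + n) % m < 2 * n := by
  have hab := lt_add_of_div_eq_div hn h
  have hba' := lt_add_of_div_eq_div hn h.symm
  have hmod : a - b + n ≡ a % m + n - b % m [MOD m] := by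
    refine Nat.ModEq.add_right_cancel' (b % m) ?_
    calc a - b + n + b % m ≡ a - b + n + b [MOD m] := (Nat.mod_modEq b m).add_left _
      _ = a + n := by omega
      _ ≡ a % m + n [MOD m] := (Nat.mod_modEq a m).symm.add_right _
      _ = a % m + n - b % m + b % m := by omega
  rw [hmod]
  exact (Nat.mod_le _ _).trans_lt (by omega)

lemma card_filter_odd_mod_lt_le {M : ℕ} (hM : Even M) (k c : ℕ) :
    #{t ∈ range (k * M) | Odd t ∧ t % M < 2 * c} ≤ k * c := by
  calc #{t ∈ range (k * M) | Odd t ∧ t % M < 2 * c}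
      ≤ #(range k ×ˢ range c) := card_le_card_of_injOn (fun t => (t / M, t % M / 2)) ?_ ?_
    _ = k * c := by simp
  · intro t ht
    simp only [coe_filter, mem_range, Set.mem_ofPred_eq] at ht
    simp only [coe_product, coe_range, Set.mem_prod, Set.mem_Iio]
    exact ⟨Nat.div_lt_of_lt_mul (mul_comm k M ▸ ht.1), by omega⟩
  · intro s hs t ht hst
    simp only [coe_filter, Set.mem_ofPred_eq, Prod.mk.injEq] at hs ht hst
    have hs2 := Nat.odd_iff.mp (hs.2.1.mod_even hM)
    have ht2 := Nat.odd_iff.mp (ht.2.1.mod_even hM)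
    rw [← Nat.div_add_mod s M, ← Nat.div_add_mod t M, hst.1]
    omega

lemma injOn_mul_add_mod {o m : ℕ} (ho : o.Coprime m) (c : ℕ) :
    Set.InjOn (fun r => (r * o + c) % m) (range m) := by
  intro r hr s hs hrs
  simp only [coe_range, Set.mem_Iio] at hr hs
  have : r * o ≡ s * o [MOD m] := Nat.ModEq.add_right_cancel' c hrs
  simpa [Nat.ModEq, Nat.mod_eq_of_lt hr, Nat.mod_eq_of_lt hs] using
    this.cancel_right_of_coprime (Nat.coprime_comm.mp ho)

lemma card_filter_odd_mul_add_mod_lt_le {w n d : ℕ} (hwn : w ≤ n) (hd : ¬ 2 ^ w ∣ d) :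
    #{r ∈ range (2 ^ n) | Odd r ∧ (r * d + 2 ^ w) % 2 ^ n < 2 * 2 ^ w} ≤ 2 ^ w := by
  obtain ⟨j, o, ho, rfl⟩ := Nat.exists_eq_two_pow_mul_odd (n := d) (by rintro rfl; simp at hd)
  have hjw : j < w := by
    by_contra! h
    exact hd ((pow_dvd_pow 2 h).mul_right o)
  set M := 2 ^ (n - j)
  set c := 2 ^ (w - j)
  have hn : 2 ^ n = 2 ^ j * M := by rw [← pow_add]; congr 1; omega
  have hw : 2 ^ w = 2 ^ j * c := by rw [← pow_add]; congr 1; omega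
  have hc : Even c := Nat.even_pow.mpr ⟨even_two, by omega⟩
  have hM : Even M := Nat.even_pow.mpr ⟨even_two, by omega⟩
  have hinj : Set.InjOn (fun r => (r * o + c) % 2 ^ n) (range (2 ^ n)) :=
    injOn_mul_add_mod (Nat.Coprime.pow_right n (Nat.coprime_two_right.mpr ho)) c
  calc #{r ∈ range (2 ^ n) | Odd r ∧ (r * (2 ^ j * o) + 2 ^ w) % 2 ^ n < 2 * 2 ^ w}
      ≤ #{t ∈ range (2 ^ j * M) | Odd t ∧ t % M < 2 * c} :=
        card_le_card_of_injOn _ ?_ (hinj.mono (coe_subset.mpr (filter_subset _ _)))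
    _ ≤ 2 ^ j * c := card_filter_odd_mod_lt_le hM _ _
    _ = 2 ^ w := hw.symm
  intro r hr
  simp only [coe_filter, mem_range, Set.mem_ofPred_eq] at hr ⊢
  obtain ⟨-, hr, hwin⟩ := hr
  have hshift : r * (2 ^ j * o) + 2 ^ w = 2 ^ j * (r * o + c) := by rw [hw]; ring
  rw [hshift, hn, Nat.mul_mod_mul_left, hw, mul_left_comm] at hwin
  refine ⟨hn ▸ Nat.mod_lt _ (by positivity), ((hr.mul ho).add_even hc).mod_even ?_, ?_⟩
  · exact hn ▸ hM.mul_left _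
  · rw [Nat.mod_mod_of_dvd _ (hn ▸ dvd_mul_left M _)]
    exact Nat.lt_of_mul_lt_mul_left hwin

lemma card_filter_odd_mod_div_eq_le {w n z z' : ℕ} (hwn : w ≤ n) (hz : z < 2 ^ w) (hlt : z' < z) :
    #{r ∈ range (2 ^ n) | Odd r ∧ r * z % 2 ^ n / 2 ^ w = r * z' % 2 ^ n / 2 ^ w} ≤ 2 ^ w :=
  calc _ ≤ #{r ∈ range (2 ^ n) | Odd r ∧ (r * (z - z') + 2 ^ w) % 2 ^ n < 2 * 2 ^ w} := by
        refine card_le_card (monotone_filter_right _ fun r _ ⟨hr, hcol⟩ => ⟨hr, ?_⟩)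
        rw [Nat.mul_sub]
        exact sub_add_mod_lt_of_mod_div_eq (by positivity) (Nat.mul_le_mul_left r hlt.le) hcol
    _ ≤ 2 ^ w :=
      card_filter_odd_mul_add_mod_lt_le hwn (Nat.not_dvd_of_pos_of_lt (by omega) (by omega))

theorem dietzfelbinger_collision_prob_general (w ℓ : ℕ)
    (z z' : ℕ) (hz : z < 2 ^ w) (hz' : z' < 2 ^ w) (hne : z ≠ z') :
    ((((Finset.range (2 ^ (w + ℓ))).filter fun r =>
          Odd r ∧ (r * z % 2 ^ (w + ℓ)) / 2 ^ w
            = (r * z' % 2 ^ (w + ℓ)) / 2 ^ w).card : ℝ))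
      ≤ (2 / 2 ^ ℓ) *
        (((Finset.range (2 ^ (w + ℓ))).filter fun r => Odd r).card : ℝ) := by
  wlog hlt : z' < z generalizing z z'
  · simp_rw [eq_comm (a := _ * z % _ / _)]
    exact this z' z hz' hz hne.symm (by omega)
  have hw : w ≠ 0 := by rintro rfl; omega
  have hodd : #{r ∈ range (2 ^ (w + ℓ)) | Odd r} = 2 ^ (w - 1 + ℓ) := by
    rw [show w + ℓ = w - 1 + ℓ + 1 by omega, pow_succ', card_filter_odd_range_two_mul]
  rw [hodd]
  calc _ ≤ (2 : ℝ) ^ w := by exact_mod_cast card_filter_odd_mod_div_eq_le (by omega) hz hlt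
    _ = 2 / 2 ^ ℓ * 2 ^ (w - 1 + ℓ) := by
      rw [pow_add]
      field_simp
      rw [← pow_succ', Nat.sub_add_cancel (by omega)]
    _ = _ := by push_cast; rfl

/-- For distinct `z, z' ∈ [2^w]`, the probability over a uniformly random odd
`r ∈ [2^{w+ℓ}]` that `h(z) = h(z')` (with `h(x) = ⌊(r·x mod 2^{w+ℓ})/2^w⌋`)
is at most `2/2^ℓ`. -/
theorem dietzfelbinger_collision_prob (w ℓ : ℕ) (hℓw : ℓ ≤ w)
    (z z' : ℕ) (hz : z < 2 ^ w) (hz' : z' < 2 ^ w) (hne : z ≠ z') :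
    ((((Finset.range (2 ^ (w + ℓ))).filter fun r =>
          Odd r ∧ (r * z % 2 ^ (w + ℓ)) / 2 ^ w
            = (r * z' % 2 ^ (w + ℓ)) / 2 ^ w).card : ℝ))
      ≤ (2 / 2 ^ ℓ) *
        (((Finset.range (2 ^ (w + ℓ))).filter fun r => Odd r).card : ℝ) :=
  dietzfelbinger_collision_prob_general w ℓ z z' hz hz' hne
end

section
/- Let A ⊆ [n] and B ⊆ [n] be sets of integers where every element of A is divisible by a positive integer Δ. For intervals represented by left endpoints: if A' and B' consist of the left endpoints of disjoint length-L intervals of A and length-ℓ intervals of B, respectively, with ℓ | L, ℓ dividing each left endpoint, then COUNT[z] := |{(a,b) ∈ A×B : a+b=z}| satisfies COUNT[z] = Σ_{i=0}^{L+ℓ-2} w(i)·COUNT'[z-i], where COUNT'[z'] = |{(a',b') ∈ A'×B' : a'+b'=z'}| and w(i) = |{(i₁,i₂) ∈ [L]×[ℓ] : i₁+i₂=i}|. -/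
/-!
Every `a ∈ A` is uniquely `a' + i` with `a' ∈ A'`, `i ∈ [0, L)`, and every `b ∈ B` uniquely
`b' + j` with `b' ∈ B'`, `j ∈ [0, ℓ)`, by disjointness of the intervals. So a representation
`z = a + b` is a quadruple with `a' + b' = z - (i + j)`; grouping the quadruples by `i + j`
gives the weighted sum.
-/

open Finset Pointwise

namespace Finset

variable {G H : Type*} [DecidableEq G] [DecidableEq H]

def addRepCount [Add G] (A B : Finset G) (z : G) : ℕ :=
  #{p ∈ A ×ˢ B | p.1 + p.2 = z}

section Add

variable [Add G]

theorem addRepCount_eq_sum (A B : Finset G) (z : G) :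
    A.addRepCount B z = ∑ a ∈ A, ∑ b ∈ B, if a + b = z then 1 else 0 := by
  rw [addRepCount, card_filter, sum_product]

theorem addRepCount_eq_zero {A B : Finset G} {z : G} (h : z ∉ A + B) : A.addRepCount B z = 0 := by
  rw [addRepCount, card_eq_zero, filter_eq_empty_iff]
  rintro ⟨a, b⟩ hab rfl
  exact h (add_mem_add (mem_product.1 hab).1 (mem_product.1 hab).2)

theorem addRepCount_biUnion_left {ι : Type*} {S : Finset ι} {f : ι → Finset G}
    (hf : (S : Set ι).PairwiseDisjoint f) (B : Finset G) (z : G) :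
    (S.biUnion f).addRepCount B z = ∑ s ∈ S, (f s).addRepCount B z := by
  simp only [addRepCount_eq_sum, sum_biUnion hf]

theorem addRepCount_biUnion_right {ι : Type*} {S : Finset ι} {f : ι → Finset G}
    (hf : (S : Set ι).PairwiseDisjoint f) (A : Finset G) (z : G) :
    A.addRepCount (S.biUnion f) z = ∑ s ∈ S, A.addRepCount (f s) z := by
  simp only [addRepCount_eq_sum, sum_biUnion hf]
  exact sum_comm

end Add

theorem addRepCount_image [AddZeroClass G] [AddZeroClass H] (f : G →+ H)
    (hf : Function.Injective f) (A B : Finset G) (z : G) :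
    (A.image f).addRepCount (B.image f) (f z) = A.addRepCount B z := by
  simp only [addRepCount_eq_sum, sum_image hf.injOn, ← map_add, hf.eq_iff]

section AddCommGroup

variable [AddCommGroup G]

theorem addRepCount_vadd_left (a : G) (A B : Finset G) (z : G) :
    (a +ᵥ A).addRepCount B z = A.addRepCount B (z - a) := by
  rw [vadd_finset_def, addRepCount_eq_sum, sum_image (AddAction.injective a).injOn,
    addRepCount_eq_sum]
  simp only [vadd_eq_add, add_assoc, eq_sub_iff_add_eq']

theorem addRepCount_vadd_right (b : G) (A B : Finset G) (z : G) :
    A.addRepCount (b +ᵥ B) z = A.addRepCount B (z - b) := by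
  rw [vadd_finset_def, addRepCount_eq_sum, addRepCount_eq_sum]
  refine sum_congr rfl fun a _ => ?_
  rw [sum_image (AddAction.injective b).injOn]
  simp only [vadd_eq_add, add_left_comm a b, eq_sub_iff_add_eq']

/-- Associativity of the convolution `f * (1_A * 1_B)`. -/
theorem sum_mul_addRepCount {R : Type*} [Semiring R] {W : Finset G} {f : G → R}
    (hf : ∀ w ∉ W, f w = 0) (A B : Finset G) (z : G) :
    ∑ w ∈ W, f w * A.addRepCount B (z - w) = ∑ a ∈ A, ∑ b ∈ B, f (z - a - b) := by
  have hterm : ∀ a b w, f w * ((if a + b = z - w then 1 else 0 : ℕ) : R)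
      = if z - a - b = w then f w else 0 := by
    intro a b w
    have : (a + b = z - w) ↔ (z - a - b = w) := by
      rw [eq_sub_iff_add_eq, sub_sub, sub_eq_iff_eq_add', eq_comm]
    split_ifs <;> simp_all
  simp only [addRepCount_eq_sum, Nat.cast_sum, mul_sum, hterm]
  rw [sum_comm]
  refine sum_congr rfl fun a _ => ?_
  rw [sum_comm]
  refine sum_congr rfl fun b _ => ?_
  rw [sum_ite_eq, ite_eq_left_iff]
  exact fun h => (hf _ h).symm

theorem addRepCount_biUnion_vadd {A' B' I J W : Finset G}
    (hA' : (A' : Set G).PairwiseDisjoint (· +ᵥ I)) (hB' : (B' : Set G).PairwiseDisjoint (· +ᵥ J))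
    (hW : I + J ⊆ W) (z : G) :
    (A'.biUnion (· +ᵥ I)).addRepCount (B'.biUnion (· +ᵥ J)) z
      = ∑ w ∈ W, I.addRepCount J w * A'.addRepCount B' (z - w) := by
  have hsupp : ∀ w ∉ W, I.addRepCount J w = 0 := fun w hw => addRepCount_eq_zero (hw <| hW ·)
  have hconv := sum_mul_addRepCount hsupp A' B' z
  simp only [Nat.cast_id] at hconv
  rw [hconv, addRepCount_biUnion_left hA']
  refine sum_congr rfl fun a' _ => ?_
  rw [addRepCount_vadd_left, addRepCount_biUnion_right hB']
  simp only [addRepCount_vadd_right]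

end AddCommGroup

end Finset

theorem Int.Ico_add_natCast_eq_vadd (a : ℤ) (L : ℕ) :
    Finset.Ico a (a + L) = a +ᵥ (Finset.range L).image (Nat.cast : ℕ → ℤ) := by
  rw [Int.Ico_eq_finset_map, add_sub_cancel_left, Int.toNat_natCast, vadd_finset_def,
    image_image, map_eq_image]
  rfl

theorem count_interval_decomposition_general (L ℓ : ℕ)
    (A' B' : Finset ℤ)
    (hA'disj : (A' : Set ℤ).PairwiseDisjoint
      fun a' => Finset.Ico a' (a' + (L : ℤ)))
    (hB'disj : (B' : Set ℤ).PairwiseDisjoint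
      fun b' => Finset.Ico b' (b' + (ℓ : ℤ)))
    (A B : Finset ℤ)
    (hA : A = A'.biUnion fun a' => Finset.Ico a' (a' + (L : ℤ)))
    (hB : B = B'.biUnion fun b' => Finset.Ico b' (b' + (ℓ : ℤ))) :
    ∀ z : ℤ,
      ((A ×ˢ B).filter fun p => p.1 + p.2 = z).card
        = ∑ i ∈ Finset.range (L + ℓ - 1),
            ((Finset.range L ×ˢ Finset.range ℓ).filter
                fun q => q.1 + q.2 = i).card *
              ((A' ×ˢ B').filter fun p => p.1 + p.2 = z - (i : ℤ)).card := by
  intro z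
  simp only [Int.Ico_add_natCast_eq_vadd] at hA hB hA'disj hB'disj
  have hW : (range L).image (Nat.cast : ℕ → ℤ) + (range ℓ).image Nat.cast
      ⊆ (range (L + ℓ - 1)).image Nat.cast := by
    intro x hx
    simp only [mem_add, mem_image, mem_range] at hx ⊢
    obtain ⟨_, ⟨i, hi, rfl⟩, _, ⟨j, hj, rfl⟩, rfl⟩ := hx
    exact ⟨i + j, by omega, by push_cast; rfl⟩
  have key := addRepCount_biUnion_vadd hA'disj hB'disj hW z
  rw [← hA, ← hB, sum_image fun _ _ _ _ h => Int.ofNat_inj.1 h] at key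
  have hweight : ∀ i : ℕ, ((range L).image (Nat.cast : ℕ → ℤ)).addRepCount
      ((range ℓ).image Nat.cast) i = (range L).addRepCount (range ℓ) i :=
    addRepCount_image (Nat.castAddMonoidHom ℤ) Nat.cast_injective _ _
  simp only [hweight] at key
  exact key

/-- Counts of pairwise sums of interval unions decompose via endpoint counts:
`COUNT[z] = Σ_{i=0}^{L+ℓ-2} w(i)·COUNT'[z-i]`. -/
theorem count_interval_decomposition (n L ℓ Δ : ℕ)
    (hL : 0 < L) (hℓ : 0 < ℓ) (hΔ : 0 < Δ) (hdvd : ℓ ∣ L)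
    (A' B' : Finset ℤ)
    (hA'div : ∀ a' ∈ A', (ℓ : ℤ) ∣ a') (hB'div : ∀ b' ∈ B', (ℓ : ℤ) ∣ b')
    (hA'disj : (A' : Set ℤ).PairwiseDisjoint
      fun a' => Finset.Ico a' (a' + (L : ℤ)))
    (hB'disj : (B' : Set ℤ).PairwiseDisjoint
      fun b' => Finset.Ico b' (b' + (ℓ : ℤ)))
    (A B : Finset ℤ)
    (hA : A = A'.biUnion fun a' => Finset.Ico a' (a' + (L : ℤ)))
    (hB : B = B'.biUnion fun b' => Finset.Ico b' (b' + (ℓ : ℤ)))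
    (hAn : ∀ a ∈ A, 0 ≤ a ∧ a < (n : ℤ))
    (hBn : ∀ b ∈ B, 0 ≤ b ∧ b < (n : ℤ))
    (hAΔ : ∀ a ∈ A, (Δ : ℤ) ∣ a) :
    ∀ z : ℤ,
      ((A ×ˢ B).filter fun p => p.1 + p.2 = z).card
        = ∑ i ∈ Finset.range (L + ℓ - 1),
            ((Finset.range L ×ˢ Finset.range ℓ).filter
                fun q => q.1 + q.2 = i).card *
              ((A' ×ˢ B').filter fun p => p.1 + p.2 = z - (i : ℤ)).card :=
  count_interval_decomposition_general L ℓ A' B' hA'disj hB'disj A B hA hB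
end

section
/- Let N₂ = m₁·m₂⋯m_d with each m_i ≥ 2, and let ω be a primitive N₂-th root of unity in a field F. The Cooley-Tukey decomposition is correct: defining the digit-reversal permutation rev(x) = Σ_{i=1}^d x_i · m_{i+1}⋯m_d for x = Σ_{i=1}^d x_i · m₁⋯m_{i-1} (0 ≤ x_i < m_i), and performing d rounds where round i multiplies twiddle factors ω^{(N₂/M_i)·s·j} and applies length-m_i DFTs with root ω^{N₂/m_i} (M_i = m₁⋯m_i), the working array initialized as A[x] = a_{rev(x)} ends with A[k] = Σ_{j=0}^{N₂-1} a_j ω^{jk} for all k. -/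
private lemma ct_sum_range_mul {F : Type*} [AddCommMonoid F] (n m : ℕ) (f : ℕ → F) :
    ∑ u ∈ Finset.range (n * m), f u
      = ∑ t ∈ Finset.range n, ∑ s ∈ Finset.range m, f (t * m + s) := by
  induction n with
  | zero => simp
  | succ n ih =>
    rw [Nat.succ_mul, Finset.sum_range_add, ih, Finset.sum_range_succ]

/-- Correctness of the Cooley–Tukey FFT decomposition: starting from the
digit-reversed input and performing `d` rounds of twiddle-factor
multiplications followed by short DFTs yields the length-`N` DFT. -/
theorem cooley_tukey_correct {F : Type*} [Field F]
    (d : ℕ) (m : ℕ → ℕ) (hm : ∀ i < d, 2 ≤ m i)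
    (M : ℕ → ℕ) (hM : ∀ i, M i = ∏ j ∈ Finset.range i, m j)
    (N : ℕ) (hN : N = ∏ i ∈ Finset.range d, m i)
    (ω : F) (hω : IsPrimitiveRoot ω N)
    (a : ℕ → F) (A : ℕ → ℕ → F)
    (hinit : ∀ x < N,
      A 0 x = a (∑ i ∈ Finset.range d, (x / M i % m i) * (N / M (i + 1))))
    (hround : ∀ i < d, ∀ k < N / M (i + 1), ∀ j < M i, ∀ s' < m i,
      A (i + 1) (k * M (i + 1) + s' * M i + j)
        = ∑ s ∈ Finset.range (m i),
            A i (k * M (i + 1) + s * M i + j)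
              * ω ^ (N / M (i + 1) * (s * j))
              * ω ^ (N / m i * (s * s'))) :
    ∀ k < N, A d k = ∑ j ∈ Finset.range N, a j * ω ^ (j * k) := by
  have hmpos : ∀ i < d, 0 < m i := fun i hi => lt_of_lt_of_le two_pos (hm i hi)
  have hMpos : ∀ i ≤ d, 0 < M i := by
    intro i hi
    rw [hM]
    exact Finset.prod_pos (fun j hj => hmpos j (lt_of_lt_of_le (Finset.mem_range.1 hj) hi))
  have hNpos : 0 < N := by
    rw [hN]; exact Finset.prod_pos (fun j hj => hmpos j (Finset.mem_range.1 hj))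
  have hMsucc : ∀ i, M (i + 1) = M i * m i := by
    intro i; rw [hM, hM, Finset.prod_range_succ]
  have hMdvd : ∀ i j, i ≤ j → M i ∣ M j := by
    intro i j hij
    rw [hM, hM]
    exact Finset.prod_dvd_prod_of_subset _ _ _ (Finset.range_subset_range.2 hij)
  have hMd : M d = N := by rw [hM, hN]
  have hMdvdN : ∀ i ≤ d, M i ∣ N := fun i hi => hMd ▸ hMdvd i d hi
  set rev : ℕ → ℕ := fun x => ∑ j ∈ Finset.range d, (x / M j % m j) * (N / M (j + 1)) with hrevdef
  have hdigit0 : ∀ j, 0 < M j → ∀ v, M j * m j ∣ v → v / M j % m j = 0 := by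
    intro j hj v hv
    obtain ⟨c, rfl⟩ := hv
    rw [mul_assoc, Nat.mul_div_cancel_left _ hj, Nat.mul_mod_right]
  have hrev_add : ∀ i < d, ∀ k, ∀ s < m i,
      rev (k * M (i + 1) + s * M i) = s * (N / M (i + 1)) + rev (k * M (i + 1)) := by
    intro i hi k s hs
    have hdig : ∀ j < d, (k * M (i + 1) + s * M i) / M j % m j
        = (k * M (i + 1)) / M j % m j + (if j = i then s else 0) := by
      intro j hj
      rcases lt_trichotomy j i with hji | rfl | hij
      · have hMjm : M j * m j ∣ M i := by
          have : M (j + 1) ∣ M i := hMdvd _ _ hji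
          rwa [hMsucc] at this
        have h1 : M j * m j ∣ k * M (i + 1) + s * M i :=
          dvd_add (Dvd.dvd.mul_left (hMjm.trans (hMdvd i (i+1) (Nat.le_succ i))) k)
            (Dvd.dvd.mul_left hMjm s)
        have h2 : M j * m j ∣ k * M (i + 1) :=
          Dvd.dvd.mul_left (hMjm.trans (hMdvd i (i+1) (Nat.le_succ i))) k
        rw [hdigit0 j (hMpos j (le_of_lt hj)) _ h1, hdigit0 j (hMpos j (le_of_lt hj)) _ h2]
        simp [Nat.ne_of_lt hji]
      · have hMi : 0 < M j := hMpos j (le_of_lt hj)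
        have e1 : (k * M (j + 1) + s * M j) / M j = k * m j + s := by
          rw [hMsucc, show k * (M j * m j) + s * M j = (k * m j + s) * M j from by ring,
            Nat.mul_div_cancel _ hMi]
        have e2 : (k * M (j + 1)) / M j = k * m j := by
          rw [hMsucc, show k * (M j * m j) = (k * m j) * M j from by ring,
            Nat.mul_div_cancel _ hMi]
        rw [e1, e2, if_pos rfl, add_comm (k * m j) s, Nat.add_mul_mod_self_right,
          Nat.mul_mod_left, Nat.mod_eq_of_lt hs, zero_add]
      · obtain ⟨c, hc⟩ := hMdvd (i + 1) j hij
        have hMip : 0 < M (i + 1) := hMpos (i + 1) (by omega)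
        have hsM : s * M i < M (i + 1) := by
          rw [hMsucc]
          calc s * M i < m i * M i := Nat.mul_lt_mul_of_pos_right hs (hMpos i (le_of_lt hi))
            _ = M i * m i := mul_comm _ _
        have e1 : (k * M (i + 1) + s * M i) / M j = k / c := by
          rw [hc, ← Nat.div_div_eq_div_mul, add_comm,
            Nat.add_mul_div_right _ _ hMip, Nat.div_eq_of_lt hsM, zero_add]
        have e2 : (k * M (i + 1)) / M j = k / c := by
          rw [hc, ← Nat.div_div_eq_div_mul, Nat.mul_div_cancel _ hMip]
        rw [e1, e2, if_neg (Nat.ne_of_gt hij)]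
        simp
    calc rev (k * M (i + 1) + s * M i)
        = ∑ j ∈ Finset.range d,
            ((k * M (i + 1)) / M j % m j + (if j = i then s else 0)) * (N / M (j + 1)) := by
          apply Finset.sum_congr rfl
          intro j hj
          rw [hdig j (Finset.mem_range.1 hj)]
      _ = rev (k * M (i + 1))
          + ∑ j ∈ Finset.range d, (if j = i then s else 0) * (N / M (j + 1)) := by
          rw [← Finset.sum_add_distrib]
          apply Finset.sum_congr rfl
          intro j hj
          ring
      _ = s * (N / M (i + 1)) + rev (k * M (i + 1)) := by
          rw [add_comm]
          congr 1
          rw [Finset.sum_eq_single i]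
          · simp
          · intro b _ hb; simp [hb]
          · intro h; exact absurd (Finset.mem_range.2 hi) h
  have key : ∀ i, i ≤ d → ∀ k < N / M i, ∀ x < M i,
      A i (k * M i + x) = ∑ t ∈ Finset.range (M i),
        a (t * (N / M i) + rev (k * M i)) * ω ^ ((N / M i) * (t * x)) := by
    intro i
    induction i with
    | zero =>
      intro _ k hk x hx
      have hM0 : M 0 = 1 := by rw [hM]; simp
      rw [hM0] at hk hx ⊢
      have hx0 : x = 0 := by omega
      subst hx0
      simp only [mul_one, add_zero]
      rw [hinit k (by simpa using hk)]
      simp [hrevdef]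
    | succ i ih =>
      intro hi1 k hk x hx
      have hi : i < d := hi1
      have hmipos : 0 < m i := hmpos i hi
      have hMipos : 0 < M i := hMpos i (le_of_lt hi)
      obtain ⟨q, hq⟩ := hMdvdN (i + 1) hi1
      have hq1 : N / M (i + 1) = q := by
        rw [hq, Nat.mul_div_cancel_left _ (hMpos (i+1) hi1)]
      have hNq : N = M i * m i * q := by rw [hq, hMsucc]
      have hq2 : N / M i = m i * q := by
        rw [hNq, mul_assoc, Nat.mul_div_cancel_left _ hMipos]
      have hq3 : N / m i = M i * q := by
        rw [hNq, mul_comm (M i) (m i), mul_assoc, Nat.mul_div_cancel_left _ hmipos]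
      set s' := x / M i with hs'def
      set j := x % M i with hjdef
      have hjlt : j < M i := Nat.mod_lt _ hMipos
      have hs'lt : s' < m i := by
        rw [hs'def]
        apply Nat.div_lt_of_lt_mul
        rw [← hMsucc]
        exact hx
      have hxeq : x = s' * M i + j := by
        rw [hs'def, hjdef, mul_comm, Nat.div_add_mod]
      have step1 : ∀ s < m i, A i (k * M (i + 1) + s * M i + j)
          = ∑ t ∈ Finset.range (M i),
              a (t * (N / M i) + rev (k * M (i + 1) + s * M i)) * ω ^ ((N / M i) * (t * j)) := by
        intro s hs
        have hidx : k * M (i + 1) + s * M i = (k * m i + s) * M i := by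
          rw [hMsucc]; ring
        have hbound : k * m i + s < N / M i := by
          rw [hq2]
          calc k * m i + s < k * m i + m i := by omega
            _ = (k + 1) * m i := by ring
            _ ≤ q * m i := Nat.mul_le_mul_right _ (by rw [hq1] at hk; omega)
            _ = m i * q := mul_comm _ _
        rw [hidx]
        rw [ih (le_of_lt hi) (k * m i + s) hbound j hjlt]
      rw [hxeq, ← add_assoc]
      rw [hround i hi k hk j hjlt s' hs'lt]
      have hM1 : M (i + 1) = M i * m i := hMsucc i
      conv_rhs => rw [hM1]
      rw [ct_sum_range_mul (M i) (m i), ← hM1, Finset.sum_comm]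
      apply Finset.sum_congr rfl
      intro s hs
      replace hs := Finset.mem_range.1 hs
      rw [step1 s hs, Finset.sum_mul, Finset.sum_mul]
      apply Finset.sum_congr rfl
      intro t ht
      replace ht := Finset.mem_range.1 ht
      rw [hrev_add i hi k s hs]
      have hidx2 : (t * m i + s) * (N / M (i + 1)) + rev (k * M (i + 1))
          = t * (N / M i) + (s * (N / M (i + 1)) + rev (k * M (i + 1))) := by
        rw [hq1, hq2]; ring
      rw [hidx2]
      have hexp : N / M (i + 1) * ((t * m i + s) * (s' * M i + j))
          = N * (t * s')
            + ((N / M i) * (t * j) + (N / M (i + 1) * (s * j) + N / m i * (s * s'))) := by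
        rw [hq1, hq2, hq3, hNq]; ring
      have h1 : ω ^ (N * (t * s')) = 1 := by
        rw [pow_mul, hω.pow_eq_one, one_pow]
      rw [hexp, pow_add, h1, one_mul, pow_add]
      ring
  intro k hk
  have hk' := key d le_rfl 0 (by rw [hMd, Nat.div_self hNpos]; omega) k (by rwa [hMd])
  rw [Nat.zero_mul, zero_add] at hk'
  rw [hk', hMd, Nat.div_self hNpos]
  apply Finset.sum_congr rfl
  intro t ht
  have hrev0 : rev 0 = 0 := by
    rw [hrevdef]
    simp
  rw [hrev0, mul_one, add_zero, one_mul]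
end

section
/- Let P be a pattern of length m ≤ N and T a text. Construct A = {-2N·P[i] - i : i ∈ [m]} and B = {2N·T[i] + i : i ∈ [n]}, where P[i], T[i] ∈ [N] are the characters viewed as integers and n ≤ N. Then for every shift c ∈ [N], the number of pairs (a,b) ∈ A × B with a + b = c equals the number of positions j ∈ [m] with P[j] = T[c + j] (where out-of-range text positions never match). -/
/-- Reduction from Text-to-Pattern Hamming Distances to the 3SUM variant:
with `A = {-2N·P[i] - i}` and `B = {2N·T[i] + i}`, the number of pairs summing
to `c ∈ [N]` equals the number of matching positions at shift `c`. -/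
theorem hamming_to_3sum_variant (N m n : ℕ) (hm : m ≤ N) (hn : n ≤ N)
    (P T : ℕ → ℕ) (hP : ∀ i < m, P i < N) (hT : ∀ i < n, T i < N)
    (A B : Finset ℤ)
    (hA : A = (Finset.range m).image
      fun i => -(2 * (N : ℤ) * (P i : ℤ)) - (i : ℤ))
    (hB : B = (Finset.range n).image
      fun i => 2 * (N : ℤ) * (T i : ℤ) + (i : ℤ)) :
    ∀ c < N,
      ((A ×ˢ B).filter fun p => p.1 + p.2 = (c : ℤ)).card
        = ((Finset.range m).filter
            fun j => c + j < n ∧ P j = T (c + j)).card := by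
  intro c hc
  have hN : 0 < N := Nat.pos_of_ne_zero (by omega)
  subst hA hB
  symm
  apply Finset.card_bij (fun j _ =>
    ((-(2 * (N : ℤ) * (P j : ℤ)) - (j : ℤ),
      2 * (N : ℤ) * (T (c + j) : ℤ) + ((c + j : ℕ) : ℤ)) : ℤ × ℤ))
  · intro j hj
    simp only [Finset.mem_filter, Finset.mem_range] at hj
    obtain ⟨hjm, hcj, hPT⟩ := hj
    simp only [Finset.mem_filter, Finset.mem_product, Finset.mem_image, Finset.mem_range]
    refine ⟨⟨⟨j, hjm, rfl⟩, ⟨c + j, hcj, rfl⟩⟩, ?_⟩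
    rw [hPT]; push_cast; ring
  · intro i hi j hj heq
    simp only [Finset.mem_filter, Finset.mem_range] at hi hj
    have h1 : -(2 * (N : ℤ) * (P i : ℤ)) - (i : ℤ)
        = -(2 * (N : ℤ) * (P j : ℤ)) - (j : ℤ) := congrArg Prod.fst heq
    have hdvd : (2 * (N : ℤ)) ∣ ((i : ℤ) - j) :=
      ⟨(P j : ℤ) - P i, by linarith⟩
    have h0 : (i : ℤ) - j = 0 := Int.eq_zero_of_abs_lt_dvd hdvd (by
      rw [abs_lt]; constructor <;> push_cast <;> omega)
    omega
  · rintro ⟨a, b⟩ hp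
    simp only [Finset.mem_filter, Finset.mem_product, Finset.mem_image, Finset.mem_range] at hp
    obtain ⟨⟨⟨i, him, hai⟩, ⟨j, hjn, hbj⟩⟩, hsum⟩ := hp
    subst hai hbj
    
    have hdvd : (2 * (N : ℤ)) ∣ ((j : ℤ) - i - c) :=
      ⟨(P i : ℤ) - T j, by linear_combination hsum⟩
    have h0 : (j : ℤ) - i - c = 0 := Int.eq_zero_of_abs_lt_dvd hdvd (by
      rw [abs_lt]; constructor <;> push_cast <;> omega)
    have hj' : j = c + i := by omega
    have h2 : 2 * (N : ℤ) * ((T j : ℤ) - P i) = 0 := by linear_combination hsum - h0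
    have h3 : (T j : ℤ) = P i := by
      rcases mul_eq_zero.mp h2 with h | h
      · exfalso; have : (0:ℤ) < 2 * (N:ℤ) := by positivity
        omega
      · linarith
    have h4 : P i = T (c + i) := by
      rw [← hj']; exact_mod_cast h3.symm
    refine ⟨i, ?_, ?_⟩
    · simp only [Finset.mem_filter, Finset.mem_range]
      exact ⟨him, by omega, h4⟩
    · rw [← hj']
end
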